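/- arXiv:math/9907127 — 2 statements merged into one kernel-verified Lean document; each statement's English description precedes it below -/
import Mathlib

section
/- (Desnanot–Jacobi / Lewis Carroll identity) For an n×n matrix M with n ≥ 2, det(M)·det(M with first and last rows and first and last columns removed) = det(M with first row and first column removed)·det(M with last row and last column removed) − det(M with first row and last column removed)·det(M with last row and first column removed). -/
/-!
Multiplying `A` on the right by the matrix whose first block of columns is that of `adj A` and
whose remaining columns are those of the identity gives a block triangular matrix with diagonal
blocks `det A • 1` and `A₂₂`; hence `det A * det (adj A)₁₁ = det A ^ |m| * det A₂₂` (Jacobi's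
complementary minor theorem). One factor `det A` cancels for the generic matrix over `ℤ[X_ij]`,
and the identity specialises to every commutative ring. Desnanot–Jacobi is the case where the
first block indexes the first and last row: the corner entries of `adj M` are the four minors.
-/

open Matrix

namespace Matrix

variable {m n R : Type*} [Fintype m] [Fintype n] [DecidableEq m] [DecidableEq n] [CommRing R]

theorem mul_fromBlocks_adjugate_toBlocks (A : Matrix (m ⊕ n) (m ⊕ n) R) :
    A * fromBlocks A.adjugate.toBlocks₁₁ 0 A.adjugate.toBlocks₂₁ 1 =
      fromBlocks (A.det • 1) A.toBlocks₁₂ 0 A.toBlocks₂₂ := by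
  have h i j := congr_fun₂ A.mul_adjugate i (.inl j)
  simp only [mul_apply, Fintype.sum_sum_type, smul_apply, one_apply, smul_eq_mul] at h
  ext (i | i) (j | j)
  · simpa [mul_apply, Fintype.sum_sum_type, toBlocks₁₁, toBlocks₂₁, one_apply] using h (.inl i) j
  · simp [mul_apply, Fintype.sum_sum_type, toBlocks₁₂, one_apply]
  · simpa [mul_apply, Fintype.sum_sum_type, toBlocks₁₁, toBlocks₂₁] using h (.inr i) j
  · simp [mul_apply, Fintype.sum_sum_type, toBlocks₂₂, one_apply]

theorem det_mul_det_toBlocks₁₁_adjugate (A : Matrix (m ⊕ n) (m ⊕ n) R) :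
    A.det * A.adjugate.toBlocks₁₁.det = A.det ^ Fintype.card m * A.toBlocks₂₂.det := by
  simpa [det_fromBlocks_zero₁₂, det_fromBlocks_zero₂₁, det_smul] using
    congr_arg det A.mul_fromBlocks_adjugate_toBlocks

theorem det_toBlocks₁₁_adjugate [Nonempty m] (A : Matrix (m ⊕ n) (m ⊕ n) R) :
    A.adjugate.toBlocks₁₁.det = A.det ^ (Fintype.card m - 1) * A.toBlocks₂₂.det := by
  let X := mvPolynomialX (m ⊕ n) (m ⊕ n) ℤ
  let f := MvPolynomial.aeval (R := ℤ) fun p : (m ⊕ n) × (m ⊕ n) ↦ A p.1 p.2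
  suffices X.adjugate.toBlocks₁₁.det = X.det ^ (Fintype.card m - 1) * X.toBlocks₂₂.det by
    rw [← mvPolynomialX_mapMatrix_aeval ℤ A, ← AlgHom.map_adjugate]
    change det (f.mapMatrix X.adjugate.toBlocks₁₁) =
      det (f.mapMatrix X) ^ _ * det (f.mapMatrix X.toBlocks₂₂)
    rw [← AlgHom.map_det, ← AlgHom.map_det, ← AlgHom.map_det, ← map_pow, ← map_mul, this]
  apply mul_left_cancel₀ (det_mvPolynomialX_ne_zero (m ⊕ n) ℤ)
  rw [det_mul_det_toBlocks₁₁_adjugate, ← mul_assoc, ← pow_succ',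
    Nat.sub_add_cancel Fintype.card_pos]

section Fin

variable {k : ℕ} (A : Matrix (Fin (k + 1)) (Fin (k + 1)) R)

theorem adjugate_apply_zero_zero : A.adjugate 0 0 = (A.submatrix Fin.succ Fin.succ).det := by
  simp [adjugate_fin_succ_eq_det_submatrix]

theorem adjugate_apply_last_last :
    A.adjugate (Fin.last k) (Fin.last k) = (A.submatrix Fin.castSucc Fin.castSucc).det := by
  simp [adjugate_fin_succ_eq_det_submatrix, ← two_mul]

theorem adjugate_apply_zero_last_mul_adjugate_apply_last_zero :
    A.adjugate 0 (Fin.last k) * A.adjugate (Fin.last k) 0 =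
      (A.submatrix Fin.succ Fin.castSucc).det * (A.submatrix Fin.castSucc Fin.succ).det := by
  simp only [adjugate_fin_succ_eq_det_submatrix, Fin.succAbove_zero, Fin.succAbove_last,
    Fin.val_zero, Fin.val_last, add_zero, zero_add]
  rw [mul_mul_mul_comm, ← pow_add, Even.neg_one_pow ⟨k, rfl⟩, one_mul, mul_comm]

end Fin

end Matrix

noncomputable def finEndsSumInterior (n : ℕ) : Fin 2 ⊕ Fin n ≃ Fin (n + 2) :=
  Equiv.ofBijective (Sum.elim ![0, Fin.last (n + 1)] fun k ↦ k.succ.castSucc) <| by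
    rw [Fintype.bijective_iff_injective_and_card]
    refine ⟨Function.Injective.sumElim ?ends ?interior ?disjoint, by simp [add_comm]⟩
    case ends => intro a b; fin_cases a <;> fin_cases b <;> simp [Fin.ext_iff]
    case interior => intro a b h; simpa using h
    case disjoint => intro a b; fin_cases a <;> simp [Fin.ext_iff]; omega

/-- Desnanot–Jacobi (Lewis Carroll) identity: for an `n×n` matrix `M`, `n ≥ 2`,
`det M · det M^{1,n}_{1,n} = det M^1_1 · det M^n_n − det M^1_n · det M^n_1`,
where a superscript (resp. subscript) indicates a deleted row (resp. column). -/
theorem desnanot_jacobi {R : Type*} [CommRing R] (n : ℕ)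
    (M : Matrix (Fin (n + 2)) (Fin (n + 2)) R) :
    M.det *
        (M.submatrix (fun i : Fin n => i.succ.castSucc)
          (fun j : Fin n => j.succ.castSucc)).det =
      (M.submatrix Fin.succ Fin.succ).det * (M.submatrix Fin.castSucc Fin.castSucc).det -
        (M.submatrix Fin.succ Fin.castSucc).det * (M.submatrix Fin.castSucc Fin.succ).det := by
  have h := det_toBlocks₁₁_adjugate (M.submatrix (finEndsSumInterior n) (finEndsSumInterior n))
  rw [adjugate_submatrix_equiv_self, det_submatrix_equiv_self, det_fin_two, Fintype.card_fin,
    Nat.add_one_sub_one, pow_one] at h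
  rw [← adjugate_apply_zero_zero, ← adjugate_apply_last_last,
    ← adjugate_apply_zero_last_mul_adjugate_apply_last_zero]
  exact h.symm
end

section
/- (Jacobi–Trudi matrix-element identity) For partitions μ ⊆ λ with at most n parts, det(h_{λ_i − μ_j + j − i}(x))_{1≤i,j≤n} = s_{λ/μ}(x), the skew Schur function; in particular for μ = ∅, det(h_{λ_i + j − i})_{1≤i,j≤n} = s_λ(x). -/
open MvPolynomial Finset
open scoped Classical

/-- `h_k` with integer index, `h_k = 0` for `k < 0`, `h_0 = 1`. -/
noncomputable def hInt (N : ℕ) (k : ℤ) : MvPolynomial (Fin N) ℚ :=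
  if 0 ≤ k then hsymm (Fin N) ℚ k.toNat else 0

/-- The boxes of the skew shape `λ/μ`, for partitions with part functions `f` (for `λ`)
and `g` (for `μ`), with at most `n` parts: the cells `(i,j)` with `g i ≤ j < f i`. -/
def skewBoxes (n : ℕ) (f g : ℕ → ℕ) : Finset (ℕ × ℕ) :=
  (Finset.range n ×ˢ Finset.range (f 0)).filter fun p => g p.1 ≤ p.2 ∧ p.2 < f p.1

/-- A filling of the skew shape is semistandard: rows weakly increase, columns strictly
increase. -/
def IsSsyt (n : ℕ) (f g : ℕ → ℕ) {N : ℕ} (T : skewBoxes n f g → Fin N) : Prop :=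
  ∀ p q : skewBoxes n f g,
    ((p : ℕ × ℕ).1 = (q : ℕ × ℕ).1 ∧ (q : ℕ × ℕ).2 = (p : ℕ × ℕ).2 + 1 → T p ≤ T q) ∧
    ((q : ℕ × ℕ).1 = (p : ℕ × ℕ).1 + 1 ∧ (q : ℕ × ℕ).2 = (p : ℕ × ℕ).2 → T p < T q)

/-- The skew Schur polynomial `s_{λ/μ}` in `N` variables: the generating polynomial of
semistandard Young tableaux of shape `λ/μ` with entries in `{1,…,N}`. -/
noncomputable def skewSchur (n N : ℕ) (f g : ℕ → ℕ) : MvPolynomial (Fin N) ℚ :=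
  ∑ T ∈ (Finset.univ : Finset (skewBoxes n f g → Fin N)).filter (IsSsyt n f g),
    ∏ p, X (T p)

/-!
Lindström–Gessel–Viennot. Writing `h_k` as a sum over lattice paths with `k` east steps, each east
step at height `v` weighted by `x_v`, turns the determinant into a signed sum over families of
paths, path `i` running from abscissa `μ_i - i` to `λ_{σ i} - σ i`. Exchanging the tails of two
paths at a common point chosen canonically is a weight-preserving, sign-reversing involution of
the intersecting families, so only non-intersecting families survive. As both sequences of
endpoints strictly decrease, these have `σ = 1`; and recording, for each row `i`, the heights of
the east steps of path `i` identifies them with the semistandard tableaux of shape `λ/μ`, column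
strictness being exactly the condition that consecutive paths stay strictly apart.
-/

theorem Multiset.prod_map_eq_prod_pow_count {ι M : Type*} [Fintype ι] [DecidableEq ι]
    [CommMonoid M] (s : Multiset ι) (f : ι → M) : (s.map f).prod = ∏ i, f i ^ s.count i := by
  rw [Finset.prod_multiset_map_count]
  exact prod_subset (subset_univ _) fun i _ hi => by
    rw [Multiset.count_eq_zero.mpr (by simpa using hi), pow_zero]

theorem Fin.partialSum_last {M : Type*} [AddCommMonoid M] {n : ℕ} (f : Fin n → M) :
    Fin.partialSum f (Fin.last n) = ∑ i, f i := by
  simp [Fin.partialSum, List.take_of_length_le, List.sum_ofFn]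

theorem Fintype.sum_eq_sum_of_eq_off_pair {ι M : Type*} [Fintype ι] [DecidableEq ι]
    [AddCommMonoid M] {i j : ι} (hij : i ≠ j) {F G : ι → M} (hpair : F i + F j = G i + G j)
    (hoff : ∀ k, k ≠ i → k ≠ j → F k = G k) : ∑ k, F k = ∑ k, G k := by
  have hcompl : ∑ k ∈ {i, j}ᶜ, F k = ∑ k ∈ {i, j}ᶜ, G k := Finset.sum_congr rfl fun k hk => by
    simp only [mem_compl, mem_insert, mem_singleton, not_or] at hk
    exact hoff k hk.1 hk.2
  rw [← sum_add_sum_compl {i, j} F, ← sum_add_sum_compl {i, j} G, sum_pair hij, sum_pair hij,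
    hpair, hcompl]

namespace JacobiTrudi

variable {n N : ℕ}

section Paths

/-- A lattice path with unit east and north steps is recorded by `q : Fin (N + 1) → ℤ`: its
east run at height `v : Fin N` goes from abscissa `q v.castSucc` to `q v.succ`. -/
noncomputable def paths (N : ℕ) (a b : ℤ) : Finset (Fin (N + 1) → ℤ) :=
  {q ∈ Fintype.piFinset fun _ => Icc a b | Monotone q ∧ q 0 = a ∧ q (Fin.last N) = b}

theorem mem_paths {a b : ℤ} {q : Fin (N + 1) → ℤ} :
    q ∈ paths N a b ↔ Monotone q ∧ q 0 = a ∧ q (Fin.last N) = b := by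
  simp only [paths, mem_filter, Fintype.mem_piFinset, mem_Icc, and_iff_right_iff_imp]
  rintro ⟨hq, rfl, rfl⟩ u
  exact ⟨hq (Fin.zero_le u), hq (Fin.le_last u)⟩

def steps (q : Fin (N + 1) → ℤ) (v : Fin N) : ℕ := (q v.succ - q v.castSucc).toNat

def pathOfSteps (a : ℤ) (d : Fin N → ℕ) : Fin (N + 1) → ℤ :=
  fun u => a + Fin.partialSum (fun v => (d v : ℤ)) u

noncomputable def pathWeight (q : Fin (N + 1) → ℤ) : MvPolynomial (Fin N) ℚ :=
  ∏ v, X v ^ steps q v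

theorem steps_pathOfSteps (a : ℤ) (d : Fin N → ℕ) : steps (pathOfSteps a d) = d := by
  ext v
  simp [steps, pathOfSteps, Fin.partialSum_succ]

theorem pathOfSteps_steps {q : Fin (N + 1) → ℤ} (hq : Monotone q) :
    pathOfSteps (q 0) (steps q) = q := by
  have hsteps : (fun v => (steps q v : ℤ)) = fun v => -q v.castSucc + q v.succ := by
    funext v
    have := hq (Fin.castSucc_le_succ v)
    simp only [steps]
    omega
  conv_rhs => rw [← Fin.partialSum_left_neg q]
  funext u
  simp [pathOfSteps, hsteps]

theorem pathOfSteps_mem_paths (a : ℤ) (d : Fin N → ℕ) :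
    pathOfSteps a d ∈ paths N a (a + ∑ v, (d v : ℤ)) := by
  refine mem_paths.mpr ⟨Fin.monotone_iff_le_succ.mpr fun v => ?_, by simp [pathOfSteps], ?_⟩
  · simp [pathOfSteps, Fin.partialSum_succ]
  · simp [pathOfSteps, Fin.partialSum_last]

theorem sum_steps {a b : ℤ} {q : Fin (N + 1) → ℤ} (hq : q ∈ paths N a b) :
    ∑ v, steps q v = (b - a).toNat := by
  obtain ⟨hmono, h0, hl⟩ := mem_paths.mp hq
  have := congrFun (pathOfSteps_steps hmono) (Fin.last N)
  simp only [pathOfSteps, Fin.partialSum_last, h0, hl, ← Nat.cast_sum] at this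
  omega

theorem prod_pathWeight (Q : Fin n → Fin (N + 1) → ℤ) :
    ∏ k, pathWeight (Q k) = ∏ w, X w ^ ∑ k, steps (Q k) w := by
  simp only [pathWeight]
  rw [prod_comm]
  simp only [prod_pow_eq_pow_sum]

theorem hInt_sub_eq_sum_paths (a b : ℤ) : hInt N (b - a) = ∑ q ∈ paths N a b, pathWeight q := by
  rcases lt_or_ge b a with hba | hab
  · have hempty : paths N a b = ∅ := eq_empty_of_forall_notMem fun q hq => by
      obtain ⟨hmono, h0, hl⟩ := mem_paths.mp hq
      have := hmono (Fin.zero_le (Fin.last N))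
      omega
    rw [hInt, if_neg (by omega), hempty, sum_empty]
  obtain ⟨k, rfl⟩ : ∃ k : ℕ, b = a + k := ⟨(b - a).toNat, by omega⟩
  rw [hInt, if_pos (by omega), show (a + k - a).toNat = k by omega, hsymm]
  let e := Sym.equivNatSumOfFintype (Fin N) k
  refine sum_bij' (fun s _ => pathOfSteps a (e s).1) (fun q hq => e.symm ⟨steps q, ?_⟩)
    (fun s _ => ?_) (fun _ _ => mem_univ _) (fun s _ => ?_) (fun q hq => ?_) (fun s _ => ?_)
  · rw [sum_steps hq]; omega
  · have := pathOfSteps_mem_paths a (e s).1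
    rwa [← Nat.cast_sum, (e s).2] at this
  · simp [steps_pathOfSteps]
  · simp [← (mem_paths.mp hq).2.1, pathOfSteps_steps (mem_paths.mp hq).1]
  · simp [pathWeight, steps_pathOfSteps, Multiset.prod_map_eq_prod_pow_count, e]

end Paths

section Families

def shifted (p : ℕ → ℕ) (i : Fin n) : ℤ := p i - i

theorem shifted_strictAnti {p : ℕ → ℕ} (hp : Antitone p) : StrictAnti (shifted (n := n) p) :=
  fun i j hij => by
    have := hp (Fin.le_iff_val_le_val.mp hij.le)
    have : (i : ℕ) < j := hij
    simp only [shifted]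
    omega

abbrev PathFamily (n N : ℕ) := Σ _ : Equiv.Perm (Fin n), Fin n → Fin (N + 1) → ℤ

noncomputable def families (N : ℕ) (a b : Fin n → ℤ) : Finset (PathFamily n N) :=
  univ.sigma fun σ => Fintype.piFinset fun i => paths N (a i) (b (σ i))

theorem mem_families {a b : Fin n → ℤ} {x : PathFamily n N} :
    x ∈ families N a b ↔ ∀ i, x.2 i ∈ paths N (a i) (b (x.1 i)) := by
  simp [families]

noncomputable def signedWeight (x : PathFamily n N) : MvPolynomial (Fin N) ℚ :=
  Equiv.Perm.sign x.1 • ∏ i, pathWeight (x.2 i)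

theorem det_hInt_eq_sum_families (a b : Fin n → ℤ) :
    (Matrix.of fun i j => hInt N (b i - a j)).det = ∑ x ∈ families N a b, signedWeight x := by
  simp only [Matrix.det_apply, Matrix.of_apply, hInt_sub_eq_sum_paths, prod_univ_sum, smul_sum,
    families, sum_sigma, signedWeight]

end Families

section Intersections

/-- The lattice point at height `p.1` and abscissa `p.2` lies on the path `q`. -/
def OnPath (q : Fin (N + 1) → ℤ) (p : Fin N × ℤ) : Prop :=
  q p.1.castSucc ≤ p.2 ∧ p.2 ≤ q p.1.succ

instance (q : Fin (N + 1) → ℤ) (p : Fin N × ℤ) : Decidable (OnPath q p) := instDecidableAnd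

def NonIntersecting (Q : Fin n → Fin (N + 1) → ℤ) : Prop :=
  Pairwise fun i j => ∀ p, ¬ (OnPath (Q i) p ∧ OnPath (Q j) p)

noncomputable def pathsThrough (Q : Fin n → Fin (N + 1) → ℤ) (p : Fin N × ℤ) : Finset (Fin n) :=
  {k | OnPath (Q k) p}

noncomputable def meetingPoints (Q : Fin n → Fin (N + 1) → ℤ) : Finset (Fin N × ℤ) :=
  {p ∈ univ ×ˢ univ.biUnion fun kv : Fin n × Fin N =>
      Icc (Q kv.1 kv.2.castSucc) (Q kv.1 kv.2.succ) | 1 < #(pathsThrough Q p)}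

theorem mem_pathsThrough {Q : Fin n → Fin (N + 1) → ℤ} {p : Fin N × ℤ} {k : Fin n} :
    k ∈ pathsThrough Q p ↔ OnPath (Q k) p := by
  simp [pathsThrough]

theorem card_pathsThrough (Q : Fin n → Fin (N + 1) → ℤ) (p : Fin N × ℤ) :
    #(pathsThrough Q p) = ∑ k, if OnPath (Q k) p then 1 else 0 :=
  card_filter _ _

theorem mem_meetingPoints {Q : Fin n → Fin (N + 1) → ℤ} {p : Fin N × ℤ} :
    p ∈ meetingPoints Q ↔ 1 < #(pathsThrough Q p) := by
  simp only [meetingPoints, mem_filter, and_iff_right_iff_imp]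
  intro h
  obtain ⟨k, hk⟩ := card_pos.mp (by omega : 0 < #(pathsThrough Q p))
  rw [mem_pathsThrough, OnPath] at hk
  simp only [mem_product, mem_univ, mem_biUnion, mem_Icc, true_and, Prod.exists]
  exact ⟨k, p.1, hk⟩

theorem meetingPoints_nonempty_iff {Q : Fin n → Fin (N + 1) → ℤ} :
    (meetingPoints Q).Nonempty ↔ ¬ NonIntersecting Q := by
  simp only [NonIntersecting, Pairwise, not_forall, not_not, Finset.Nonempty, mem_meetingPoints,
    one_lt_card, mem_pathsThrough]
  constructor
  · rintro ⟨p, i, hi, j, hj, hij⟩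
    exact ⟨i, j, hij, p, hi, hj⟩
  · rintro ⟨i, j, hij, p, hi, hj⟩
    exact ⟨p, i, hi, j, hj, hij⟩

def swapTails (Q : Fin n → Fin (N + 1) → ℤ) (i j : Fin n) (v : Fin N) :
    Fin n → Fin (N + 1) → ℤ :=
  fun k u => if u ≤ v.castSucc then Q k u else Q (Equiv.swap i j k) u

section SwapTails

variable (Q : Fin n → Fin (N + 1) → ℤ) (i j : Fin n) (v : Fin N)

theorem swapTails_swapTails : swapTails (swapTails Q i j v) i j v = Q := by
  funext k u
  by_cases hu : u ≤ v.castSucc <;> simp [swapTails, hu]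

theorem swapTails_zero (k : Fin n) : swapTails Q i j v k 0 = Q k 0 :=
  if_pos (Fin.zero_le _)

theorem swapTails_last (k : Fin n) :
    swapTails Q i j v k (Fin.last N) = Q (Equiv.swap i j k) (Fin.last N) :=
  if_neg (by simp [Fin.le_iff_val_le_val])

theorem swapTails_castSucc (k : Fin n) (w : Fin N) :
    swapTails Q i j v k w.castSucc = Q (if w ≤ v then k else Equiv.swap i j k) w.castSucc := by
  simp only [swapTails, Fin.castSucc_le_castSucc_iff]
  split_ifs <;> rfl

theorem swapTails_succ (k : Fin n) (w : Fin N) :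
    swapTails Q i j v k w.succ = Q (if w < v then k else Equiv.swap i j k) w.succ := by
  simp only [swapTails, Fin.succ_le_castSucc_iff]
  split_ifs <;> rfl

/-- Below height `v` nothing changes and above it the paths `i` and `j` are merely exchanged;
`hφ` accounts for height `v`, where their runs are recombined. -/
theorem sum_swapTails_level {M : Type*} [AddCommMonoid M] (hij : i ≠ j) (φ : ℤ → ℤ → M)
    (hφ : φ (Q i v.castSucc) (Q j v.succ) + φ (Q j v.castSucc) (Q i v.succ)
      = φ (Q i v.castSucc) (Q i v.succ) + φ (Q j v.castSucc) (Q j v.succ)) (w : Fin N) :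
    ∑ k, φ (swapTails Q i j v k w.castSucc) (swapTails Q i j v k w.succ)
      = ∑ k, φ (Q k w.castSucc) (Q k w.succ) := by
  simp only [swapTails_castSucc, swapTails_succ]
  rcases lt_trichotomy w v with hw | rfl | hw
  · simp [hw, hw.le]
  · simp only [le_refl, if_true, lt_irrefl, if_false]
    refine Fintype.sum_eq_sum_of_eq_off_pair hij ?_ fun k hki hkj => ?_
    · simpa using hφ
    · rw [Equiv.swap_apply_of_ne_of_ne hki hkj]
  · simp only [not_le.mpr hw, not_lt.mpr hw.le, if_false]
    exact Equiv.sum_comp (Equiv.swap i j) fun k => φ (Q k w.castSucc) (Q k w.succ)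

variable {Q i j v} {x : ℤ} (hij : i ≠ j) (hi : OnPath (Q i) (v, x)) (hj : OnPath (Q j) (v, x))
include hij hi hj

theorem card_pathsThrough_swapTails (p : Fin N × ℤ) :
    #(pathsThrough (swapTails Q i j v) p) = #(pathsThrough Q p) := by
  simp only [card_pathsThrough, OnPath]
  refine sum_swapTails_level Q i j v hij (fun lo hi => if lo ≤ p.2 ∧ p.2 ≤ hi then 1 else 0)
    ?_ p.1
  simp only [OnPath] at hi hj
  split_ifs <;> omega

theorem meetingPoints_swapTails : meetingPoints (swapTails Q i j v) = meetingPoints Q := by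
  ext p
  simp only [mem_meetingPoints, card_pathsThrough_swapTails hij hi hj]

theorem pathsThrough_swapTails :
    pathsThrough (swapTails Q i j v) (v, x) = pathsThrough Q (v, x) := by
  ext k
  simp only [mem_pathsThrough, OnPath, swapTails_castSucc, swapTails_succ, le_refl, if_true,
    lt_irrefl, if_false]
  simp only [OnPath] at hi hj
  rcases eq_or_ne k i with rfl | hki
  · simp only [Equiv.swap_apply_left]; omega
  rcases eq_or_ne k j with rfl | hkj
  · simp only [Equiv.swap_apply_right]; omega
  · rw [Equiv.swap_apply_of_ne_of_ne hki hkj]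

theorem prod_pathWeight_swapTails :
    ∏ k, pathWeight (swapTails Q i j v k) = ∏ k, pathWeight (Q k) := by
  simp only [prod_pathWeight, steps]
  refine prod_congr rfl fun w _ => ?_
  rw [sum_swapTails_level Q i j v hij (fun lo hi => (hi - lo).toNat)
    (by simp only [OnPath] at hi hj; omega)]

theorem swapTails_mem_paths {a b : Fin n → ℤ} {σ : Equiv.Perm (Fin n)}
    (hQ : ∀ k, Q k ∈ paths N (a k) (b (σ k))) (k : Fin n) :
    swapTails Q i j v k ∈ paths N (a k) (b ((σ * Equiv.swap i j) k)) := by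
  have hmono k := (mem_paths.mp (hQ k)).1
  refine mem_paths.mpr ⟨Fin.monotone_iff_le_succ.mpr fun w => ?_, ?_, ?_⟩
  · rw [swapTails_castSucc, swapTails_succ]
    rcases lt_trichotomy w v with hw | rfl | hw
    · simpa [hw, hw.le] using hmono _ (Fin.castSucc_le_succ w)
    · simp only [le_refl, if_true, lt_irrefl, if_false]
      simp only [OnPath] at hi hj
      rw [Equiv.swap_apply_def]
      split_ifs with hki hkj
      · subst hki; omega
      · subst hkj; omega
      · exact hmono k (Fin.castSucc_le_succ w)
    · simpa [not_le.mpr hw, not_lt.mpr hw.le] using hmono _ (Fin.castSucc_le_succ w)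
  · rw [swapTails_zero]; exact (mem_paths.mp (hQ k)).2.1
  · rw [swapTails_last]; exact (mem_paths.mp (hQ _)).2.2

end SwapTails

section Pivot

variable (Q : Fin n → Fin (N + 1) → ℤ) (h : (meetingPoints Q).Nonempty)

/-- Any choice works, provided it only depends on the set of meeting points, which
`swapTails` preserves. -/
noncomputable def pivot : Fin N × ℤ := h.choose

theorem one_lt_card_pathsThrough_pivot : 1 < #(pathsThrough Q (pivot Q h)) :=
  mem_meetingPoints.mp h.choose_spec

theorem pathsThrough_pivot_nonempty : (pathsThrough Q (pivot Q h)).Nonempty :=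
  card_pos.mp (one_pos.trans (one_lt_card_pathsThrough_pivot Q h))

noncomputable def pivotLo : Fin n :=
  (pathsThrough Q (pivot Q h)).min' (pathsThrough_pivot_nonempty Q h)

noncomputable def pivotHi : Fin n :=
  (pathsThrough Q (pivot Q h)).max' (pathsThrough_pivot_nonempty Q h)

theorem pivotLo_ne_pivotHi : pivotLo Q h ≠ pivotHi Q h :=
  (min'_lt_max'_of_card _ (one_lt_card_pathsThrough_pivot Q h)).ne

theorem onPath_pivotLo : OnPath (Q (pivotLo Q h)) (pivot Q h) :=
  mem_pathsThrough.mp (min'_mem _ _)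

theorem onPath_pivotHi : OnPath (Q (pivotHi Q h)) (pivot Q h) :=
  mem_pathsThrough.mp (max'_mem _ _)

end Pivot

noncomputable def swapAtPivot (x : PathFamily n N) (h : (meetingPoints x.2).Nonempty) :
    PathFamily n N :=
  ⟨x.1 * Equiv.swap (pivotLo x.2 h) (pivotHi x.2 h),
    swapTails x.2 (pivotLo x.2 h) (pivotHi x.2 h) (pivot x.2 h).1⟩

section SwapAtPivot

variable (x : PathFamily n N) (h : (meetingPoints x.2).Nonempty)

theorem meetingPoints_swapAtPivot : meetingPoints (swapAtPivot x h).2 = meetingPoints x.2 :=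
  meetingPoints_swapTails (pivotLo_ne_pivotHi x.2 h) (onPath_pivotLo x.2 h) (onPath_pivotHi x.2 h)

theorem swapAtPivot_swapAtPivot (h' : (meetingPoints (swapAtPivot x h).2).Nonempty) :
    swapAtPivot (swapAtPivot x h) h' = x := by
  have hp : pivot _ h' = pivot x.2 h := by simp only [pivot, meetingPoints_swapAtPivot]
  have hs : pathsThrough (swapAtPivot x h).2 (pivot _ h') = pathsThrough x.2 (pivot x.2 h) := by
    rw [hp]
    exact pathsThrough_swapTails (pivotLo_ne_pivotHi x.2 h) (onPath_pivotLo x.2 h)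
      (onPath_pivotHi x.2 h)
  have hlo : pivotLo _ h' = pivotLo x.2 h := by simp only [pivotLo, hs]
  have hhi : pivotHi _ h' = pivotHi x.2 h := by simp only [pivotHi, hs]
  obtain ⟨σ, Q⟩ := x
  simp only [swapAtPivot] at hp hlo hhi ⊢
  rw [hp, hlo, hhi, mul_assoc, Equiv.swap_mul_self, mul_one, swapTails_swapTails]

theorem swapAtPivot_ne : swapAtPivot x h ≠ x := fun hx =>
  pivotLo_ne_pivotHi x.2 h (Equiv.swap_eq_one_iff.mp (mul_eq_left.mp (congrArg Sigma.fst hx)))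

theorem signedWeight_swapAtPivot : signedWeight (swapAtPivot x h) = -signedWeight x := by
  simp only [signedWeight, swapAtPivot, Equiv.Perm.sign_mul,
    Equiv.Perm.sign_swap (pivotLo_ne_pivotHi x.2 h), mul_neg, mul_one, Units.neg_smul]
  rw [prod_pathWeight_swapTails (v := (pivot x.2 h).1) (x := (pivot x.2 h).2)
    (pivotLo_ne_pivotHi x.2 h) (onPath_pivotLo x.2 h) (onPath_pivotHi x.2 h)]

theorem swapAtPivot_mem_families {a b : Fin n → ℤ} (hx : x ∈ families N a b) :
    swapAtPivot x h ∈ families N a b :=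
  mem_families.mpr (swapTails_mem_paths (pivotLo_ne_pivotHi x.2 h) (onPath_pivotLo x.2 h)
    (onPath_pivotHi x.2 h) (mem_families.mp hx))

end SwapAtPivot

theorem sum_signedWeight_of_not_nonIntersecting (a b : Fin n → ℤ) :
    ∑ x ∈ families N a b with ¬ NonIntersecting x.2, signedWeight x = 0 := by
  have hne {x} (hx : x ∈ {x ∈ families N a b | ¬ NonIntersecting x.2}) :
      (meetingPoints x.2).Nonempty :=
    meetingPoints_nonempty_iff.mpr (mem_filter.mp hx).2
  refine sum_involution (fun x hx => swapAtPivot x (hne hx))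
    (fun x hx => by rw [signedWeight_swapAtPivot, add_neg_cancel])
    (fun x hx _ => swapAtPivot_ne x _) (fun x hx => mem_filter.mpr ⟨?_, ?_⟩)
    (fun x hx => swapAtPivot_swapAtPivot x _ _)
  · exact swapAtPivot_mem_families x _ (mem_filter.mp hx).1
  · rw [← meetingPoints_nonempty_iff, meetingPoints_swapAtPivot]
    exact hne hx

end Intersections

section StrictlyLeft

def StrictlyLeft (r q : Fin (N + 1) → ℤ) : Prop :=
  ∀ w : Fin N, r w.succ < q w.castSucc

variable {q r s : Fin (N + 1) → ℤ}

theorem StrictlyLeft.not_onPath (h : StrictlyLeft r q) (p : Fin N × ℤ) :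
    ¬ (OnPath r p ∧ OnPath q p) := fun ⟨hr, hq⟩ => by
  have := h p.1
  simp only [OnPath] at hr hq
  omega

theorem StrictlyLeft.trans (hq : Monotone q) (hrq : StrictlyLeft r q) (hqs : StrictlyLeft q s) :
    StrictlyLeft r s :=
  fun w => (hrq w).trans ((hq (Fin.castSucc_le_succ w)).trans_lt (hqs w))

theorem succ_lt_of_not_onPath (hq : Monotone q) {w : Fin N} (hw : r w.castSucc < q w.castSucc)
    (hno : ¬ (OnPath r (w, q w.castSucc) ∧ OnPath q (w, q w.castSucc))) :
    r w.succ < q w.castSucc :=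
  not_le.mp fun h => hno ⟨⟨hw.le, h⟩, le_rfl, hq (Fin.castSucc_le_succ w)⟩

variable (hq : Monotone q) (h0 : r 0 < q 0) (hno : ∀ p, ¬ (OnPath r p ∧ OnPath q p))
include hq h0 hno

theorem lt_of_not_onPath (u : Fin (N + 1)) : r u < q u :=
  Fin.induction h0 (fun w hw => (succ_lt_of_not_onPath hq hw (hno _)).trans_le
    (hq (Fin.castSucc_le_succ w))) u

theorem strictlyLeft_of_not_onPath : StrictlyLeft r q :=
  fun w => succ_lt_of_not_onPath hq (lt_of_not_onPath hq h0 hno w.castSucc) (hno _)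

end StrictlyLeft

theorem strictlyLeft_of_lt {Q : Fin n → Fin (N + 1) → ℤ} (hmono : ∀ i, Monotone (Q i))
    (hadj : ∀ i j : Fin n, (j : ℕ) = i + 1 → StrictlyLeft (Q j) (Q i)) {i j : Fin n}
    (hij : i < j) : StrictlyLeft (Q j) (Q i) := by
  obtain ⟨j, hj⟩ := j
  replace hij : (i : ℕ) + 1 ≤ j := hij
  induction j, hij using Nat.le_induction with
  | base => exact hadj i _ rfl
  | succ k hik ih => exact (hadj ⟨k, by omega⟩ _ rfl).trans (hmono _) (ih (by omega))

theorem nonIntersecting_of_adjacent {Q : Fin n → Fin (N + 1) → ℤ} (hmono : ∀ i, Monotone (Q i))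
    (hadj : ∀ i j : Fin n, (j : ℕ) = i + 1 → StrictlyLeft (Q j) (Q i)) : NonIntersecting Q := by
  intro i j hij p
  rcases hij.lt_or_gt with h | h
  · exact fun hp => (strictlyLeft_of_lt hmono hadj h).not_onPath p hp.symm
  · exact (strictlyLeft_of_lt hmono hadj h).not_onPath p

theorem perm_eq_one_of_nonIntersecting {a b : Fin n → ℤ} (ha : StrictAnti a) (hb : StrictAnti b)
    {x : PathFamily n N} (hx : x ∈ families N a b) (hnx : NonIntersecting x.2) : x.1 = 1 := by
  have hQ := mem_families.mp hx
  refine Equiv.ext (congrFun (StrictMono.eq_id fun i j hij => ?_))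
  obtain ⟨hi, hi0, hil⟩ := mem_paths.mp (hQ i)
  obtain ⟨-, hj0, hjl⟩ := mem_paths.mp (hQ j)
  have := lt_of_not_onPath hi (by rw [hi0, hj0]; exact ha hij) (hnx hij.ne') (Fin.last N)
  rw [hil, hjl] at this
  exact hb.lt_iff_gt.mp this

section Tableaux

variable {f g : ℕ → ℕ}

theorem of_mem_skewBoxes {x : ℕ × ℕ} (hx : x ∈ skewBoxes n f g) :
    x.1 < n ∧ g x.1 ≤ x.2 ∧ x.2 < f x.1 := by
  simp only [skewBoxes, mem_filter, mem_product, mem_range] at hx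
  exact ⟨hx.1.1, hx.2⟩

theorem mem_skewBoxes (hf : Antitone f) {i c : ℕ} :
    (i, c) ∈ skewBoxes n f g ↔ i < n ∧ g i ≤ c ∧ c < f i := by
  refine ⟨of_mem_skewBoxes, fun ⟨hi, hgc, hcf⟩ => ?_⟩
  simp only [skewBoxes, mem_filter, mem_product, mem_range]
  exact ⟨⟨hi, hcf.trans_le (hf (Nat.zero_le i))⟩, hgc, hcf⟩

/-- The path `Q i` records row `i` of `T`, shifted by `-i`: it takes one east step at height
`T (i, c)` for each cell `(i, c)`. -/
def Encodes (T : skewBoxes n f g → Fin N) (Q : Fin n → Fin (N + 1) → ℤ) : Prop :=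
  ∀ (i : Fin n) (c : ℕ) (hc : ((i : ℕ), c) ∈ skewBoxes n f g) (u : Fin (N + 1)),
    (T ⟨_, hc⟩ : ℕ) < u ↔ (c : ℤ) - i < Q i u

theorem exists_castSucc_le_lt {q : Fin (N + 1) → ℤ} {x : ℤ} (h0 : q 0 ≤ x)
    (hlast : x < q (Fin.last N)) : ∃ v : Fin N, q v.castSucc ≤ x ∧ x < q v.succ := by
  by_contra! h
  have hle : ∀ u : Fin (N + 1), q u ≤ x := Fin.induction h0 fun v hv => h v hv
  exact (hle _).not_gt hlast

section Encodes

variable {T T' : skewBoxes n f g → Fin N} {Q Q' : Fin n → Fin (N + 1) → ℤ}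

theorem exists_encodes (hQ : ∀ i, Q i ∈ paths N (shifted g i) (shifted f i)) :
    ∃ T : skewBoxes n f g → Fin N, Encodes T Q := by
  have hlevel (p : skewBoxes n f g) : ∃ v : Fin N,
      Q ⟨p.1.1, (of_mem_skewBoxes p.2).1⟩ v.castSucc ≤ (p.1.2 : ℤ) - p.1.1 ∧
        (p.1.2 : ℤ) - p.1.1 < Q ⟨p.1.1, (of_mem_skewBoxes p.2).1⟩ v.succ := by
    obtain ⟨-, h0, hlast⟩ := mem_paths.mp (hQ ⟨p.1.1, (of_mem_skewBoxes p.2).1⟩)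
    have := of_mem_skewBoxes p.2
    refine exists_castSucc_le_lt ?_ ?_ <;> simp only [h0, hlast, shifted] <;> omega
  choose T hT using hlevel
  refine ⟨T, fun i c hc u => ?_⟩
  obtain ⟨hlo, hhi⟩ := hT ⟨_, hc⟩
  have hmono := (mem_paths.mp (hQ i)).1
  constructor
  · intro h
    exact hhi.trans_le (hmono (Fin.le_iff_val_le_val.mpr (by simpa using h)))
  · intro h
    by_contra! h'
    exact (hlo.trans_lt h).not_ge (hmono (Fin.le_iff_val_le_val.mpr (by simpa using h')))

theorem Encodes.unique (hT : Encodes T Q) (hT' : Encodes T' Q) : T = T' := by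
  funext ⟨⟨i, c⟩, hc⟩
  have key u := (hT ⟨i, (of_mem_skewBoxes hc).1⟩ c hc u).trans (hT' _ c hc u).symm
  have h1 := (key (T' ⟨_, hc⟩).succ).mpr (by simp)
  have h2 := (key (T ⟨_, hc⟩).succ).mp (by simp)
  simp only [Fin.val_succ] at h1 h2
  exact Fin.ext (by omega)

theorem Encodes.paths_le (hf : Antitone f)
    (hQ : ∀ i, Q i ∈ paths N (shifted g i) (shifted f i))
    (hQ' : ∀ i, Q' i ∈ paths N (shifted g i) (shifted f i)) (hT : Encodes T Q)
    (hT' : Encodes T Q') (i : Fin n) (u : Fin (N + 1)) : Q i u ≤ Q' i u := by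
  obtain ⟨hmono, -, hlast⟩ := mem_paths.mp (hQ i)
  obtain ⟨hmono', hzero', -⟩ := mem_paths.mp (hQ' i)
  have hlo := hmono' (Fin.zero_le u)
  have hhi := hmono (Fin.le_last u)
  simp only [hlast, hzero', shifted] at hlo hhi
  by_contra! h
  have hc : ((i : ℕ), (Q' i u + i).toNat) ∈ skewBoxes n f g :=
    (mem_skewBoxes hf).mpr ⟨i.2, by omega, by omega⟩
  have := (hT' i _ hc u).mp ((hT i _ hc u).mpr (by omega))
  omega

theorem Encodes.unique_paths (hf : Antitone f)
    (hQ : ∀ i, Q i ∈ paths N (shifted g i) (shifted f i))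
    (hQ' : ∀ i, Q' i ∈ paths N (shifted g i) (shifted f i)) (hT : Encodes T Q)
    (hT' : Encodes T Q') : Q = Q' :=
  funext fun i => funext fun u =>
    (hT.paths_le hf hQ hQ' hT' i u).antisymm (hT'.paths_le hf hQ' hQ hT i u)

theorem Encodes.row_le_succ (hT : Encodes T Q) {i : Fin n} {c : ℕ}
    (hc : ((i : ℕ), c) ∈ skewBoxes n f g) (hc' : ((i : ℕ), c + 1) ∈ skewBoxes n f g) :
    T ⟨_, hc⟩ ≤ T ⟨_, hc'⟩ := by
  have h := (hT i _ hc' (T ⟨_, hc'⟩).succ).mp (by simp)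
  have := (hT i c hc (T ⟨_, hc'⟩).succ).mpr (by push_cast at h; omega)
  rw [Fin.val_succ] at this
  exact Fin.le_def.mpr (by omega)

theorem Encodes.col_lt_of_strictlyLeft (hT : Encodes T Q) {i j : Fin n} (hj : (j : ℕ) = i + 1)
    (hji : StrictlyLeft (Q j) (Q i)) {c : ℕ} (hc : ((i : ℕ), c) ∈ skewBoxes n f g)
    (hc' : ((j : ℕ), c) ∈ skewBoxes n f g) : T ⟨_, hc⟩ < T ⟨_, hc'⟩ := by
  have h := (hT j c hc' (T ⟨_, hc'⟩).succ).mp (by simp)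
  have := hji (T ⟨_, hc'⟩)
  have := (hT i c hc (T ⟨_, hc'⟩).castSucc).mpr (by omega)
  exact Fin.lt_def.mpr this

theorem Encodes.strictlyLeft_of_col_lt (hf : Antitone f) (hg : Antitone g) (hT : Encodes T Q)
    {i j : Fin n} (hQi : Q i ∈ paths N (shifted g i) (shifted f i))
    (hQj : Q j ∈ paths N (shifted g j) (shifted f j)) (hj : (j : ℕ) = i + 1)
    (hcol : ∀ c (hc : ((i : ℕ), c) ∈ skewBoxes n f g) (hc' : ((j : ℕ), c) ∈ skewBoxes n f g),
      T ⟨_, hc⟩ < T ⟨_, hc'⟩) :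
    StrictlyLeft (Q j) (Q i) := by
  intro w
  by_contra! h
  obtain ⟨hmono, h0, -⟩ := mem_paths.mp hQi
  obtain ⟨hmono', -, hlast'⟩ := mem_paths.mp hQj
  have hlo := hmono (Fin.zero_le w.castSucc)
  have hhi := hmono' (Fin.le_last w.succ)
  have hgij : g j ≤ g i := hg (by omega)
  have hfij : f j ≤ f i := hf (by omega)
  simp only [h0, hlast', shifted] at hlo hhi
  -- In the column where the run of `Q i` at height `w` starts, row `j` has an entry `≤ w` and
  -- row `i` one `≥ w`.
  have hc : ((i : ℕ), (Q i w.castSucc + i).toNat) ∈ skewBoxes n f g :=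
    (mem_skewBoxes hf).mpr ⟨i.2, by omega, by omega⟩
  have hc' : ((j : ℕ), (Q i w.castSucc + i).toNat) ∈ skewBoxes n f g :=
    (mem_skewBoxes hf).mpr ⟨j.2, by omega, by omega⟩
  have h1 := (hT j _ hc' w.succ).mpr (by omega)
  have h2 := mt (hT i _ hc w.castSucc).mp (by omega)
  have := hcol _ hc hc'
  simp only [Fin.val_succ, Fin.val_castSucc, Fin.lt_def] at h1 h2 this
  omega

theorem Encodes.isSsyt_iff_nonIntersecting (hf : Antitone f) (hg : Antitone g)
    (hT : Encodes T Q) (hQ : ∀ i, Q i ∈ paths N (shifted g i) (shifted f i)) :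
    IsSsyt n f g T ↔ NonIntersecting Q := by
  have hmono i := (mem_paths.mp (hQ i)).1
  constructor
  · refine fun hssyt => nonIntersecting_of_adjacent hmono fun i j hj =>
      hT.strictlyLeft_of_col_lt hf hg (hQ i) (hQ j) hj fun c hc hc' => (hssyt _ _).2 ⟨hj, rfl⟩
  · intro hnx ⟨⟨i, c⟩, hc⟩ ⟨⟨i', c'⟩, hc'⟩
    have hi := (of_mem_skewBoxes hc).1
    have hi' := (of_mem_skewBoxes hc').1
    refine ⟨fun ⟨hii', hcc'⟩ => ?_, fun ⟨hii', hcc'⟩ => ?_⟩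
    · dsimp only at hii' hcc'
      subst hii' hcc'
      exact hT.row_le_succ (i := ⟨i, hi⟩) hc hc'
    · dsimp only at hii' hcc'
      subst hii' hcc'
      have hstart : Q ⟨i + 1, hi'⟩ 0 < Q ⟨i, hi⟩ 0 := by
        rw [(mem_paths.mp (hQ _)).2.1, (mem_paths.mp (hQ _)).2.1]
        exact shifted_strictAnti hg (Fin.mk_lt_mk.mpr (Nat.lt_succ_self i))
      exact hT.col_lt_of_strictlyLeft (i := ⟨i, hi⟩) (j := ⟨i + 1, hi'⟩) rfl
        (strictlyLeft_of_not_onPath (hmono _) hstart (hnx (by simp))) hc hc'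

end Encodes

noncomputable def rowCount (T : skewBoxes n f g → Fin N) (i u : ℕ) : ℕ :=
  #{p : skewBoxes n f g | p.1.1 = i ∧ (T p : ℕ) < u}

noncomputable def tableauPaths (T : skewBoxes n f g → Fin N) (i : Fin n) (u : Fin (N + 1)) :
    ℤ :=
  shifted g i + rowCount T i u

theorem IsSsyt.row_mono (hf : Antitone f) {T : skewBoxes n f g → Fin N} (hT : IsSsyt n f g T)
    {i c c' : ℕ} (hc : (i, c) ∈ skewBoxes n f g) (hcc' : c ≤ c')
    (hc' : (i, c') ∈ skewBoxes n f g) : T ⟨_, hc⟩ ≤ T ⟨_, hc'⟩ := by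
  induction c', hcc' using Nat.le_induction with
  | base => rfl
  | succ d hcd ih =>
    have hd : (i, d) ∈ skewBoxes n f g := by
      have := (mem_skewBoxes hf).mp hc
      have := (mem_skewBoxes hf).mp hc'
      exact (mem_skewBoxes hf).mpr ⟨by omega, by omega, by omega⟩
    exact (ih hd).trans ((hT ⟨_, hd⟩ ⟨_, hc'⟩).1 ⟨rfl, rfl⟩)

/-- Since rows weakly increase, the entries `< u` of row `i` fill an initial segment of it. -/
theorem IsSsyt.lt_rowCount_iff (hf : Antitone f) {T : skewBoxes n f g → Fin N}
    (hT : IsSsyt n f g T) {i c : ℕ} (hc : (i, c) ∈ skewBoxes n f g) (u : ℕ) :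
    (T ⟨_, hc⟩ : ℕ) < u ↔ c < g i + rowCount T i u := by
  obtain ⟨hi, hgc, hcf⟩ := (mem_skewBoxes hf).mp hc
  constructor
  · intro hlt
    have : #(Icc (g i) c) ≤ rowCount T i u := by
      refine card_le_card_of_surjOn (fun p : skewBoxes n f g => p.1.2) fun c' hc' => ?_
      obtain ⟨h1, h2⟩ := mem_Icc.mp hc'
      have hc'' : (i, c') ∈ skewBoxes n f g := (mem_skewBoxes hf).mpr ⟨hi, h1, by omega⟩
      refine ⟨⟨_, hc''⟩, mem_coe.mpr (mem_filter.mpr ⟨mem_univ _, rfl, ?_⟩), rfl⟩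
      exact lt_of_le_of_lt (Fin.le_def.mp (IsSsyt.row_mono hf hT hc'' h2 hc)) hlt
    rw [Nat.card_Icc] at this
    omega
  · intro hlt
    by_contra! hge
    have : rowCount T i u ≤ #(Ico (g i) c) := by
      refine card_le_card_of_injOn (fun p : skewBoxes n f g => p.1.2) (fun p hp => ?_) ?_
      · obtain ⟨⟨i', c'⟩, hp'⟩ := p
        obtain ⟨rfl, hlt'⟩ := (mem_filter.mp (mem_coe.mp hp)).2
        refine mem_coe.mpr (mem_Ico.mpr ⟨((mem_skewBoxes hf).mp hp').2.1, not_le.mp fun hcc' => ?_⟩)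
        exact (hlt'.trans_le hge).not_ge (Fin.le_def.mp (IsSsyt.row_mono hf hT hc hcc' hp'))
      · intro p hp p' hp' h
        exact Subtype.ext (Prod.ext
          ((mem_filter.mp (mem_coe.mp hp)).2.1.trans (mem_filter.mp (mem_coe.mp hp')).2.1.symm) h)
    rw [Nat.card_Ico] at this
    omega

theorem IsSsyt.encodes_tableauPaths (hf : Antitone f) {T : skewBoxes n f g → Fin N}
    (hT : IsSsyt n f g T) : Encodes T (tableauPaths T) := fun i c hc u => by
  rw [IsSsyt.lt_rowCount_iff hf hT hc, tableauPaths, shifted]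
  omega

theorem card_skewBoxes_row (hf : Antitone f) {i : ℕ} (hi : i < n) :
    #{p : skewBoxes n f g | p.1.1 = i} = f i - g i := by
  rw [← Nat.card_Ico]
  refine card_bij (fun p _ => p.1.2) (fun p hp => ?_) (fun p hp p' hp' h => ?_) fun c hc => ?_
  · simp only [mem_filter, mem_univ, true_and] at hp
    have := of_mem_skewBoxes p.2
    rw [hp] at this
    exact mem_Ico.mpr this.2
  · simp only [mem_filter, mem_univ, true_and] at hp hp'
    exact Subtype.ext (Prod.ext (hp.trans hp'.symm) h)
  · exact ⟨⟨_, (mem_skewBoxes hf).mpr ⟨hi, mem_Ico.mp hc⟩⟩, by simp, rfl⟩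

theorem tableauPaths_mem_paths (hf : Antitone f) (hgf : ∀ i, g i ≤ f i)
    (T : skewBoxes n f g → Fin N) (i : Fin n) :
    tableauPaths T i ∈ paths N (shifted g i) (shifted f i) := by
  refine mem_paths.mpr ⟨fun u u' huu' => ?_, ?_, ?_⟩
  · have : rowCount T i u ≤ rowCount T i u' := card_le_card fun p hp => by
      simp only [mem_filter, mem_univ, true_and] at hp ⊢
      exact ⟨hp.1, hp.2.trans_le huu'⟩
    simp only [tableauPaths]
    omega
  · simp [tableauPaths, rowCount]
  · have hrow : rowCount T i N = f i - g i := by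
      rw [← card_skewBoxes_row hf i.2, rowCount]
      simp
    simp only [tableauPaths, Fin.val_last, hrow, shifted]
    have := hgf i
    omega

theorem rowCount_succ (T : skewBoxes n f g → Fin N) (i w : ℕ) :
    rowCount T i (w + 1) =
      rowCount T i w + #{p : skewBoxes n f g | p.1.1 = i ∧ (T p : ℕ) = w} := by
  simp only [rowCount, card_filter, ← sum_add_distrib]
  exact sum_congr rfl fun p _ => by split_ifs <;> omega

theorem prod_X_eq_prod_pathWeight (T : skewBoxes n f g → Fin N) :
    ∏ p, X (T p) = ∏ i, pathWeight (tableauPaths T i) := by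
  rw [prod_pathWeight, ← prod_fiberwise univ T]
  refine prod_congr rfl fun w _ => ?_
  rw [prod_congr rfl fun p hp => by rw [(mem_filter.mp hp).2], prod_const]
  congr 1
  have hsteps (i : Fin n) :
      steps (tableauPaths T i) w = #{p : skewBoxes n f g | p.1.1 = i ∧ T p = w} := by
    simp only [steps, tableauPaths, Fin.val_succ, Fin.val_castSucc, rowCount_succ, Fin.val_inj]
    omega
  rw [card_eq_sum_card_fiberwise (f := fun p : skewBoxes n f g => p.1.1) (t := range n)
    fun p _ => mem_range.mpr (of_mem_skewBoxes p.2).1, ← Fin.sum_univ_eq_sum_range]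
  simp only [hsteps, filter_filter, and_comm]

theorem sum_nonIntersecting_eq_skewSchur (hf : Antitone f) (hg : Antitone g)
    (hgf : ∀ i, g i ≤ f i) :
    ∑ x ∈ families N (shifted (n := n) g) (shifted f) with NonIntersecting x.2, signedWeight x =
      skewSchur n N f g := by
  have hmem (T : skewBoxes n f g → Fin N) (i : Fin n) :=
    tableauPaths_mem_paths (N := N) hf hgf T i
  symm
  refine sum_bij (fun T _ => ⟨1, tableauPaths T⟩) (fun T hT => ?_) (fun T hT T' hT' h => ?_)
    (fun x hx => ?_) (fun T _ => ?_)
  · have hE := IsSsyt.encodes_tableauPaths hf (mem_filter.mp hT).2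
    exact mem_filter.mpr ⟨mem_families.mpr (hmem T),
      (hE.isSsyt_iff_nonIntersecting hf hg (hmem T)).mp (mem_filter.mp hT).2⟩
  · have hQ : tableauPaths T = tableauPaths T' := eq_of_heq (Sigma.mk.inj h).2
    have hE' := IsSsyt.encodes_tableauPaths hf (mem_filter.mp hT').2
    rw [← hQ] at hE'
    exact (IsSsyt.encodes_tableauPaths hf (mem_filter.mp hT).2).unique hE'
  · obtain ⟨hx, hnx⟩ := mem_filter.mp hx
    have hσ :=
      perm_eq_one_of_nonIntersecting (shifted_strictAnti hg) (shifted_strictAnti hf) hx hnx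
    obtain ⟨σ, Q⟩ := x
    dsimp only at hσ hnx
    subst hσ
    have hQ (i : Fin n) : Q i ∈ paths N (shifted g i) (shifted f i) := by
      simpa using mem_families.mp hx i
    obtain ⟨T, hT⟩ := exists_encodes hQ
    have hssyt := (hT.isSsyt_iff_nonIntersecting hf hg hQ).mpr hnx
    refine ⟨T, mem_filter.mpr ⟨mem_univ _, hssyt⟩, ?_⟩
    rw [(IsSsyt.encodes_tableauPaths hf hssyt).unique_paths hf (hmem T) hQ hT]
  · rw [prod_X_eq_prod_pathWeight, signedWeight, Equiv.Perm.sign_one, one_smul]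

end Tableaux

end JacobiTrudi

theorem jacobi_trudi_skew_general (n N : ℕ) (f g : ℕ → ℕ)
    (hf : Antitone f) (hg : Antitone g)
    (hgf : ∀ i, g i ≤ f i) :
    Matrix.det (Matrix.of fun i j : Fin n =>
        hInt N ((f i : ℤ) - (g j : ℤ) + (j : ℤ) - (i : ℤ))) =
      skewSchur n N f g := by
  have hentry : (Matrix.of fun i j : Fin n => hInt N ((f i : ℤ) - (g j : ℤ) + (j : ℤ) - (i : ℤ)))
      = Matrix.of fun i j => hInt N (JacobiTrudi.shifted f i - JacobiTrudi.shifted g j) := by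
    ext i j
    simp only [Matrix.of_apply, JacobiTrudi.shifted]
    ring_nf
  rw [hentry, JacobiTrudi.det_hInt_eq_sum_families,
    ← sum_filter_add_sum_filter_not _ fun x => JacobiTrudi.NonIntersecting x.2,
    JacobiTrudi.sum_signedWeight_of_not_nonIntersecting, add_zero,
    JacobiTrudi.sum_nonIntersecting_eq_skewSchur hf hg hgf]

/-- Jacobi–Trudi identity for skew Schur functions: for partitions `μ ⊆ λ` with at most
`n` parts, `det(h_{λ_i − μ_j + j − i})_{1≤i,j≤n} = s_{λ/μ}`. -/
theorem jacobi_trudi_skew (n N : ℕ) (f g : ℕ → ℕ)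
    (hf : Antitone f) (hg : Antitone g) (hfn : ∀ i ≥ n, f i = 0)
    (hgf : ∀ i, g i ≤ f i) :
    Matrix.det (Matrix.of fun i j : Fin n =>
        hInt N ((f i : ℤ) - (g j : ℤ) + (j : ℤ) - (i : ℤ))) =
      skewSchur n N f g :=
  jacobi_trudi_skew_general n N f g hf hg hgf
end
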